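/- Let P ⊆ ℝⁿ be a Delone set of finite local complexity. There exists ε with 0 < ε < 1 such that for every differentiable function φ : ℝⁿ → ℝⁿ with sup_{x ∈ ℝⁿ} ‖Dφ(x) − I‖ < ε the following holds: for every r > 0 there exists r' > 0 such that for all x, y ∈ P, B_{r'}[φ(P) − φ(x)] = B_{r'}[φ(P) − φ(y)] implies B_r[P − x] = B_r[P − y]. -/

import Mathlib

open Metric Set

noncomputable section

/-- Euclidean space ℝⁿ. -/
abbrev Euc (n : ℕ) := EuclideanSpace ℝ (Fin n)

/-- The translate `P - x = {p - x : p ∈ P}`. -/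
def shiftSet {n : ℕ} (P : Set (Euc n)) (x : Euc n) : Set (Euc n) :=
  (fun p => p - x) '' P

/-- The `r`-patch of `P` around `x`: `B_r[P - x] = B(0,r) ∩ (P - x)`. -/
def patch {n : ℕ} (P : Set (Euc n)) (r : ℝ) (x : Euc n) : Set (Euc n) :=
  ball (0 : Euc n) r ∩ shiftSet P x

/-- `P` is uniformly discrete: there is a positive minimal distance between points. -/
def UnifDiscrete {n : ℕ} (P : Set (Euc n)) : Prop :=
  ∃ δ > 0, ∀ p ∈ P, ∀ q ∈ P, p ≠ q → δ ≤ ‖p - q‖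

/-- `P` is relatively dense: every ball of radius `R` contains a point of `P`. -/
def RelDense {n : ℕ} (P : Set (Euc n)) : Prop :=
  ∃ R > 0, ∀ x : Euc n, ∃ p ∈ P, ‖p - x‖ < R

/-- `P` has finite local complexity: for each `r > 0`, only finitely many `r`-patches
around points of `P`. -/
def FLC {n : ℕ} (P : Set (Euc n)) : Prop :=
  ∀ r > 0, {s : Set (Euc n) | ∃ x ∈ P, s = patch P r x}.Finite

/-- `f` is `P`-equivariant with range `R`. -/
def EquivRange {n : ℕ} {F : Type*} (P : Set (Euc n)) (R : ℝ) (f : Euc n → F) : Prop :=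
  ∀ x y : Euc n, patch P R x = patch P R y → f x = f y

/-- `f` is strongly `P`-equivariant: `P`-equivariant with some finite range `R > 0`. -/
def StrongEquiv {n : ℕ} {F : Type*} (P : Set (Euc n)) (f : Euc n → F) : Prop :=
  ∃ R > 0, EquivRange P R f

/-- `f`, viewed as a function on the subset `Q`, is `P`-equivariant with range `R`. -/
def EquivRangeOn {n : ℕ} {F : Type*} (P Q : Set (Euc n)) (R : ℝ) (f : Euc n → F) : Prop :=
  ∀ x ∈ Q, ∀ y ∈ Q, patch P R x = patch P R y → f x = f y

/-- `f`, viewed as a function on the subset `Q`, is strongly `P`-equivariant. -/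
def StrongEquivOn {n : ℕ} {F : Type*} (P Q : Set (Euc n)) (f : Euc n → F) : Prop :=
  ∃ R > 0, EquivRangeOn P Q R f

/-- `Q` is locally derivable from `P`. -/
def LocallyDerivable {n : ℕ} (P Q : Set (Euc n)) : Prop :=
  ∃ R > 0, ∀ x y : Euc n, patch P R x = patch P R y →
    ({0} : Set (Euc n)) ∩ shiftSet Q x = ({0} : Set (Euc n)) ∩ shiftSet Q y

/-- Hypothesis (H): for every `r > 0` there is `r' > 0` such that for all `x`,
`B(φ(x), r) ∩ φ(P) ⊆ φ(B(x, r') ∩ P)`. -/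
def HypoH {n : ℕ} (P : Set (Euc n)) (φ : Euc n → Euc n) : Prop :=
  ∀ r > 0, ∃ r' > 0, ∀ x : Euc n, ball (φ x) r ∩ (φ '' P) ⊆ φ '' (ball x r' ∩ P)

/-- The pattern metric `D` on closed subsets of ℝⁿ. -/
def patternDist {n : ℕ} (A B : Set (Euc n)) : ℝ :=
  sInf {ε : ℝ | 0 < ε ∧ Metric.hausdorffDist
    ((ball (0 : Euc n) (1 / ε) ∩ A) ∪ sphere (0 : Euc n) (1 / ε))
    ((ball (0 : Euc n) (1 / ε) ∩ B) ∪ sphere (0 : Euc n) (1 / ε)) ≤ ε}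

/-- A continuous `f : ℝⁿ → ℝⁿ` is weakly `P`-equivariant if it is uniformly approximated
by strongly `P`-equivariant continuous functions. -/
def WeakEquiv {n : ℕ} (P : Set (Euc n)) (f : Euc n → Euc n) : Prop :=
  ∀ ε > 0, ∃ g : Euc n → Euc n, Continuous g ∧ StrongEquiv P g ∧ ∀ x : Euc n, ‖f x - g x‖ < ε

/-- `P` is aperiodic: the only translation fixing `P` is `0`. -/
def IsAperiodicSet {n : ℕ} (P : Set (Euc n)) : Prop :=
  ∀ x : Euc n, shiftSet P x = P → x = 0

/-!
If `‖Dφ - I‖ ≤ K` then `φ - id` is `K`-Lipschitz, so `φ` changes a difference `a - b` of two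
points by at most `K ‖a - b‖`. By uniform discreteness and finite local complexity, the
differences of points of `P` shorter than `10 R` (`R` the relative-density radius) form a finite
set, with some minimal gap `η`; take `K < η / (12 R)`. If the `φ(P)`-patches around `φ x` and
`φ y` agree, walk from `x` to a point `p ∈ P` through points of `P` with steps `p' → p` shorter
than `3 R`, copying each step at `y`: the patch supplies `q ∈ P` with `φ q - φ y = φ p - φ x`, so
`φ q - φ q' = φ p - φ p'`, and then `q - q'` and `p - p'` are short differences of `P` closer than
`η`, hence equal.
-/

open scoped NNReal

section MetricSpace

variable {X : Type*} [MetricSpace X]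

theorem Bornology.IsBounded.finite_of_le_dist [ProperSpace X] {s : Set X} (hs : IsBounded s)
    {δ : ℝ} (hδ : 0 < δ) (hsep : ∀ a ∈ s, ∀ b ∈ s, a ≠ b → δ ≤ dist a b) : s.Finite := by
  obtain ⟨t, hts, ht, hcover⟩ := Metric.finite_approx_of_totallyBounded
    (hs.isCompact_closure.totallyBounded.subset subset_closure) δ hδ
  refine ht.subset fun a ha => ?_
  obtain ⟨b, hb, hab⟩ := mem_iUnion₂.1 (hcover ha)
  by_contra hat
  exact (hsep a ha b (hts hb) (ne_of_mem_of_not_mem hb hat).symm).not_gt hab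

theorem Set.Finite.exists_pos_le_dist {s : Set X} (hs : s.Finite) :
    ∃ η > 0, ∀ a ∈ s, ∀ b ∈ s, a ≠ b → η ≤ dist a b := by
  by_cases hnt : s.Nontrivial
  · exact ⟨s.infsep, hs.infsep_pos_iff_nontrivial.2 hnt,
      fun a ha b hb => infsep_le_dist_of_mem ha hb⟩
  · exact ⟨1, one_pos, fun a ha b hb hab => absurd (not_nontrivial_iff.1 hnt ha hb) hab⟩

end MetricSpace

section NormedSpace

variable {E : Type*} [NormedAddCommGroup E] [NormedSpace ℝ E]

theorem exists_mem_norm_sub_lt_three_mul {P : Set E} {R : ℝ} (hP : ∀ z, ∃ p ∈ P, ‖p - z‖ < R)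
    {x : E} (hx : x ∈ P) (p : E) :
    ∃ p' ∈ P, ‖p - p'‖ < 3 * R ∧ ‖p' - x‖ ≤ max 0 (‖p - x‖ - R) := by
  have hR : 0 < R := (norm_nonneg _).trans_lt (hP 0).choose_spec.2
  simp only [← dist_eq_norm] at hP ⊢
  by_cases hpx : dist p x ≤ 2 * R
  · exact ⟨x, hx, by linarith, by simp⟩
  have hd : 0 < dist p x := by linarith
  set z := AffineMap.lineMap p x (2 * R / dist p x)
  have hzp : dist z p = 2 * R := by
    rw [dist_lineMap_left, Real.norm_of_nonneg (by positivity)]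
    field_simp
  have hzx : dist z x = dist p x - 2 * R := by
    rw [dist_lineMap_right, Real.norm_of_nonneg (by rw [sub_nonneg, div_le_one hd]; linarith)]
    field_simp
  obtain ⟨p', hp', hp'z⟩ := hP z
  refine ⟨p', hp', ?_, le_max_of_le_right ?_⟩
  · linarith [dist_triangle_right p p' z, dist_comm z p]
  · linarith [dist_triangle p' z x]

theorem forall_mem_of_relDense_step {P : Set E} {R : ℝ} (hP : ∀ z, ∃ p ∈ P, ‖p - z‖ < R)
    {x : E} (hx : x ∈ P) {G : E → Prop} (hGx : G x)
    (hstep : ∀ p ∈ P, ∀ p' ∈ P, ‖p - p'‖ < 3 * R → ‖p' - x‖ ≤ ‖p - x‖ → G p' → G p) :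
    ∀ p ∈ P, G p := by
  have hR : 0 < R := (norm_nonneg _).trans_lt (hP 0).choose_spec.2
  suffices h : ∀ m : ℕ, ∀ p ∈ P, ‖p - x‖ ≤ m * R → G p by
    intro p hp
    exact h ⌈‖p - x‖ / R⌉₊ p hp ((div_le_iff₀ hR).1 (Nat.le_ceil _))
  intro m
  induction m with
  | zero =>
    intro p _ hpx
    have hpx : p = x := sub_eq_zero.1 (norm_le_zero_iff.1 (by simpa using hpx))
    rwa [hpx]
  | succ m ih =>
    intro p hp hpx
    obtain ⟨p', hp', hpp', hp'x⟩ := exists_mem_norm_sub_lt_three_mul hP hx p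
    push_cast at hpx
    refine hstep p hp p' hp' hpp' (hp'x.trans (max_le (norm_nonneg _) (by linarith))) ?_
    exact ih p' hp' (hp'x.trans (max_le (by positivity) (by linarith)))

end NormedSpace

section LipschitzPerturbation

variable {E : Type*} [NormedAddCommGroup E] {K : ℝ≥0} {φ : E → E}

theorem LipschitzWith.norm_map_sub_map_sub_sub_le (hφ : LipschitzWith K (φ - id)) (a b : E) :
    ‖φ a - φ b - (a - b)‖ ≤ K * ‖a - b‖ := by
  simpa only [Pi.sub_apply, id, sub_sub_sub_comm] using hφ.norm_sub_le a b

theorem LipschitzWith.norm_map_sub_map_le (hφ : LipschitzWith K (φ - id)) (a b : E) :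
    ‖φ a - φ b‖ ≤ (1 + K) * ‖a - b‖ := by
  linarith [norm_le_norm_sub_add (φ a - φ b) (a - b), hφ.norm_map_sub_map_sub_sub_le a b]

theorem LipschitzWith.norm_sub_le_map_sub_map (hφ : LipschitzWith K (φ - id)) (a b : E) :
    (1 - K) * ‖a - b‖ ≤ ‖φ a - φ b‖ := by
  linarith [norm_sub_norm_le (a - b) (φ a - φ b), norm_sub_rev (a - b) (φ a - φ b),
    hφ.norm_map_sub_map_sub_sub_le a b]

theorem LipschitzWith.norm_sub_le_three_mul_of_map_sub_eq (hφ : LipschitzWith K (φ - id))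
    (hK : (K : ℝ) ≤ 1 / 2) {a b c d : E} (h : φ c - φ d = φ a - φ b) :
    ‖c - d‖ ≤ 3 * ‖a - b‖ := by
  have hlow := hφ.norm_sub_le_map_sub_map c d
  have hup := hφ.norm_map_sub_map_le a b
  rw [h] at hlow
  nlinarith [norm_nonneg (c - d), norm_nonneg (a - b)]

theorem LipschitzWith.sub_eq_sub_of_map_sub_eq (hφ : LipschitzWith K (φ - id)) {D : Set E}
    {η : ℝ} (hD : ∀ u ∈ D, ∀ v ∈ D, u ≠ v → η ≤ ‖u - v‖) {a b c d : E}
    (hab : a - b ∈ D) (hcd : c - d ∈ D) (h : φ c - φ d = φ a - φ b)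
    (hη : K * (‖a - b‖ + ‖c - d‖) < η) : c - d = a - b := by
  by_contra hne
  have hdiff : c - d - (a - b) = (φ a - φ b - (a - b)) - (φ c - φ d - (c - d)) := by
    rw [h]; abel
  have hle : ‖c - d - (a - b)‖ ≤ K * (‖a - b‖ + ‖c - d‖) := by
    rw [hdiff, mul_add]
    exact (_root_.norm_sub_le _ _).trans
      (add_le_add (hφ.norm_map_sub_map_sub_sub_le a b) (hφ.norm_map_sub_map_sub_sub_le c d))
  linarith [hD _ hcd _ hab hne]

theorem lipschitzWith_sub_id_of_norm_fderiv_sub_id_le [NormedSpace ℝ E] (hφ : Differentiable ℝ φ)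
    (hK : ∀ x, ‖fderiv ℝ φ x - ContinuousLinearMap.id ℝ E‖ ≤ K) : LipschitzWith K (φ - id) := by
  refine lipschitzWith_of_nnnorm_fderiv_le (hφ.sub differentiable_id) fun x => ?_
  rw [fderiv_sub (hφ x) differentiableAt_id, fderiv_id, ← NNReal.coe_le_coe, coe_nnnorm]
  exact hK x

end LipschitzPerturbation

section Patch

variable {n : ℕ}

theorem mem_patch {P : Set (Euc n)} {r : ℝ} {x v : Euc n} :
    v ∈ patch P r x ↔ ‖v‖ < r ∧ x + v ∈ P := by
  refine and_congr mem_ball_zero_iff ⟨?_, fun h => ⟨x + v, h, add_sub_cancel_left x v⟩⟩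
  rintro ⟨p, hp, rfl⟩
  simpa using hp

theorem add_mem_of_patch_eq {P : Set (Euc n)} {r : ℝ} {x y v : Euc n}
    (h : patch P r x = patch P r y) (hv : ‖v‖ < r) (hx : x + v ∈ P) : y + v ∈ P :=
  (mem_patch.1 (h ▸ mem_patch.2 ⟨hv, hx⟩)).2

theorem UnifDiscrete.finite_patch {P : Set (Euc n)} (hP : UnifDiscrete P) (r : ℝ) (x : Euc n) :
    (patch P r x).Finite := by
  obtain ⟨δ, hδ, hsep⟩ := hP
  refine (isBounded_ball.subset inter_subset_left).finite_of_le_dist hδ fun u hu v hv huv => ?_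
  simpa [dist_eq_norm] using hsep _ (mem_patch.1 hu).2 _ (mem_patch.1 hv).2 (by simpa using huv)

theorem UnifDiscrete.finite_biUnion_patch {P : Set (Euc n)} (hUD : UnifDiscrete P) (hFLC : FLC P)
    {r : ℝ} (hr : 0 < r) : (⋃ x ∈ P, patch P r x).Finite := by
  rw [← sUnion_image]
  refine Finite.sUnion ?_ (by rintro _ ⟨x, -, rfl⟩; exact hUD.finite_patch r x)
  convert hFLC r hr using 1
  ext s
  simp [eq_comm]

theorem patch_subset_of_patch_image_eq {P : Set (Euc n)} {R η : ℝ} {K : ℝ≥0}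
    {φ : Euc n → Euc n} (hP : ∀ z, ∃ p ∈ P, ‖p - z‖ < R)
    (hD : ∀ u ∈ ⋃ x ∈ P, patch P (10 * R) x, ∀ v ∈ ⋃ x ∈ P, patch P (10 * R) x,
      u ≠ v → η ≤ ‖u - v‖)
    (hφ : LipschitzWith K (φ - id)) (hK : (K : ℝ) ≤ 1 / 2) (hKη : 12 * K * R < η)
    {r : ℝ} {x y : Euc n} (hx : x ∈ P) (hy : y ∈ P)
    (h : patch (φ '' P) (2 * r) (φ x) = patch (φ '' P) (2 * r) (φ y)) :
    patch P r x ⊆ patch P r y := by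
  have hcopy : ∀ p ∈ P, ‖p - x‖ < r → ∃ q ∈ P, q - y = p - x ∧ φ q - φ y = φ p - φ x := by
    refine forall_mem_of_relDense_step hP hx (fun _ => ⟨y, hy, by simp, by simp⟩) ?_
    intro p hp p' hp' hpp' hp'x ih hpx
    obtain ⟨q', hq', hq'y, hφq'⟩ := ih (hp'x.trans_lt hpx)
    have hφpx : ‖φ p - φ x‖ < 2 * r := by
      have := hφ.norm_map_sub_map_le p x
      have : (1 + (K : ℝ)) * ‖p - x‖ ≤ 3 / 2 * ‖p - x‖ := by gcongr; linarith
      linarith [norm_nonneg (p - x)]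
    obtain ⟨q, hq, hφq⟩ : φ y + (φ p - φ x) ∈ φ '' P :=
      add_mem_of_patch_eq h hφpx (by simpa using mem_image_of_mem φ hp)
    have hφqq' : φ q - φ q' = φ p - φ p' := by
      rw [hφq, eq_add_of_sub_eq' hφq']
      abel
    have hqq' := hφ.norm_sub_le_three_mul_of_map_sub_eq hK hφqq'
    have hdiff : ∀ a ∈ P, ∀ b ∈ P, ‖a - b‖ < 10 * R → a - b ∈ ⋃ x ∈ P, patch P (10 * R) x :=
      fun a ha b hb hab => mem_biUnion hb (mem_patch.2 ⟨hab, by simpa using ha⟩)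
    have hpD := hdiff p hp p' hp' (by linarith [norm_nonneg (p - p')])
    have hqD := hdiff q hq q' hq' (by linarith [norm_nonneg (p - p')])
    have hstep : q - q' = p - p' := by
      refine hφ.sub_eq_sub_of_map_sub_eq hD hpD hqD hφqq' ?_
      have : (K : ℝ) * (‖p - p'‖ + ‖q - q'‖) ≤ K * (12 * R) := by gcongr; linarith
      linarith
    refine ⟨q, hq, ?_, by rw [hφq]; abel⟩
    rw [← sub_add_sub_cancel q q' y, hstep, hq'y, sub_add_sub_cancel]
  intro v hv
  obtain ⟨hvr, hxv⟩ := mem_patch.1 hv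
  obtain ⟨q, hq, hqy, -⟩ := hcopy (x + v) hxv (by simpa using hvr)
  rw [add_sub_cancel_left, sub_eq_iff_eq_add'] at hqy
  exact mem_patch.2 ⟨hvr, hqy ▸ hq⟩

end Patch

theorem stmt16 {n : ℕ} (P : Set (Euc n))
    (hUD : UnifDiscrete P) (hRD : RelDense P) (hFLC : FLC P) :
    ∃ ε : ℝ, 0 < ε ∧ ε < 1 ∧
      ∀ φ : Euc n → Euc n, Differentiable ℝ φ →
      (∀ x : Euc n, ‖fderiv ℝ φ x - ContinuousLinearMap.id ℝ (Euc n)‖ < ε) →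
      ∀ r > 0, ∃ r' > 0, ∀ x ∈ P, ∀ y ∈ P,
        patch (φ '' P) r' (φ x) = patch (φ '' P) r' (φ y) →
        patch P r x = patch P r y := by
  obtain ⟨R, hR, hP⟩ := hRD
  obtain ⟨η, hη, hD⟩ :=
    (hUD.finite_biUnion_patch hFLC (by positivity : 0 < 10 * R)).exists_pos_le_dist
  simp only [dist_eq_norm] at hD
  obtain ⟨K, hK0, hK, hKη⟩ : ∃ K : ℝ≥0, 0 < (K : ℝ) ∧ (K : ℝ) ≤ 1 / 2 ∧ 12 * K * R < η := by
    have hpos : 0 < min (1 / 2 : ℝ) (η / (24 * R)) := lt_min (by norm_num) (by positivity)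
    refine ⟨⟨_, hpos.le⟩, hpos, min_le_left _ _, ?_⟩
    calc 12 * min (1 / 2 : ℝ) (η / (24 * R)) * R ≤ 12 * (η / (24 * R)) * R := by
          gcongr; exact min_le_right _ _
      _ < η := by field_simp; linarith
  refine ⟨K, hK0, by linarith, fun φ hφ hdφ r hr => ⟨2 * r, by positivity, fun x hx y hy h => ?_⟩⟩
  have hφK := lipschitzWith_sub_id_of_norm_fderiv_sub_id_le hφ fun x => (hdφ x).le
  exact (patch_subset_of_patch_image_eq hP hD hφK hK hKη hx hy h).antisymm
    (patch_subset_of_patch_image_eq hP hD hφK hK hKη hy hx h.symm)
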